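/- There exists a Borel probability measure ν on the unit sphere Sⁿ ⊂ ℝ^{n+1} such that T_α(ν,σ) = +∞ while H(ν|σ) < +∞, where σ is the uniform probability measure on Sⁿ and α(u,v) = log(1/(u·v)) if u·v > 0 and α(u,v) = +∞ otherwise. -/

import Mathlib

open MeasureTheory Set Filter
open scoped RealInnerProductSpace ENNReal Topology

/-- The set of couplings of two measures: measures on the product whose marginals are the
given measures. -/
def Coupling {α : Type*} [MeasurableSpace α] (ν₁ ν₂ : Measure α) :
    Set (Measure (α × α)) :=
  {π | π.map Prod.fst = ν₁ ∧ π.map Prod.snd = ν₂}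

/-- The optimal transport cost `T_c(ν₁,ν₂) = inf { ∫ c dπ : π coupling of ν₁ and ν₂}`. -/
noncomputable def transportCost {α : Type*} [MeasurableSpace α]
    (c : α → α → ℝ≥0∞) (ν₁ ν₂ : Measure α) : ℝ≥0∞ :=
  ⨅ π ∈ Coupling ν₁ ν₂, ∫⁻ p, c p.1 p.2 ∂π

open Classical in
/-- Relative entropy `H(ν|μ) = ∫ log (dν/dμ) dν` if `ν ≪ μ` (and the integral exists),
`+∞` otherwise.  For probability measures the negative part of the integrand is always
integrable, so the `+∞` convention for the non-integrable case is the correct one. -/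
noncomputable def relEnt {α : Type*} [MeasurableSpace α] (ν μ : Measure α) : ℝ≥0∞ :=
  if ν ≪ μ ∧ Integrable (llr ν μ) ν then ENNReal.ofReal (∫ x, llr ν μ x ∂ν) else ⊤


/-- The Oliker-Bertrand-Kolesnikov cost on the sphere:
`α(u,v) = log(1/(u·v))` if `u·v > 0` and `+∞` otherwise. -/
noncomputable def sphereCost {n : ℕ}
    (u v : EuclideanSpace ℝ (Fin (n + 1))) : ℝ≥0∞ :=
  if 0 < ⟪u, v⟫ then ENNReal.ofReal (Real.log (1 / ⟪u, v⟫)) else ⊤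


/-!
Take `ν` to be `σ` conditioned on a small cap around a pole `e`. Its density with respect to `σ`
is constant on its support, so its relative entropy is finite. On the other hand the opposite cap
around `-e` has positive `σ`-mass (by rotation invariance and compactness of the sphere, all caps
of a fixed radius have the same positive mass), so every coupling of `ν` and `σ` charges the
product of the two caps, where `u · v < 0` and the cost is infinite.
-/

open ProbabilityTheory Metric

lemma transportCost_eq_top_of_eq_top_on_prod {α : Type*} [MeasurableSpace α]
    {c : α → α → ℝ≥0∞} {ν₁ ν₂ : Measure α} {A B : Set α}
    (hA : MeasurableSet A) (hB : MeasurableSet B) (hν₁A : ν₁ Aᶜ = 0) (hν₂B : ν₂ B ≠ 0)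
    (hc : ∀ x ∈ A, ∀ y ∈ B, c x y = ⊤) :
    transportCost c ν₁ ν₂ = ⊤ := by
  refine top_unique (le_iInf₂ fun π ⟨hπ₁, hπ₂⟩ => ?_)
  have hπA : π (Prod.fst ⁻¹' A)ᶜ = 0 := by
    rw [← preimage_compl, ← Measure.map_apply measurable_fst hA.compl, hπ₁, hν₁A]
  have hπAB : π (A ×ˢ B) = ν₂ B := by
    rw [Set.prod_eq, inter_comm, measure_inter_conull hπA,
      ← Measure.map_apply measurable_snd hB, hπ₂]
  calc ⊤ = ∫⁻ _ in A ×ˢ B, ⊤ ∂π := by rw [setLIntegral_const, hπAB, ENNReal.top_mul hν₂B]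
    _ = ∫⁻ p in A ×ˢ B, c p.1 p.2 ∂π :=
        setLIntegral_congr_fun (hA.prod hB) fun p ⟨hp₁, hp₂⟩ => (hc _ hp₁ _ hp₂).symm
    _ ≤ ∫⁻ p, c p.1 p.2 ∂π := setLIntegral_le_lintegral _ _

lemma llr_cond_ae_eq {Ω : Type*} [MeasurableSpace Ω] {μ : Measure Ω} [IsFiniteMeasure μ]
    {s : Set Ω} (hs : MeasurableSet s) (hμs : μ s ≠ 0) :
    llr μ[|s] μ =ᵐ[μ[|s]] fun _ => -Real.log (μ s).toReal := by
  have hsmul : llr μ[|s] μ =ᵐ[μ.restrict s]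
      fun x => llr (μ.restrict s) μ x + Real.log (μ s)⁻¹.toReal :=
    llr_smul_left Measure.restrict_le_self.absolutelyContinuous _
      (ENNReal.inv_ne_zero.2 (measure_ne_top μ s)) (ENNReal.inv_ne_top.2 hμs)
  have hrestrict : llr (μ.restrict s) μ =ᵐ[μ.restrict s] 0 := by
    filter_upwards [Measure.restrict_le_self.absolutelyContinuous.ae_le
      (Measure.rnDeriv_restrict_self μ hs), ae_restrict_mem hs] with x hx hxs
    simp [llr_def, hx, hxs]
  filter_upwards [Measure.smul_absolutelyContinuous.ae_le (hsmul.and hrestrict)] with x ⟨hx, hx0⟩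
  simp [hx, hx0, ENNReal.toReal_inv]

lemma relEnt_cond_lt_top {Ω : Type*} [MeasurableSpace Ω] {μ : Measure Ω} [IsFiniteMeasure μ]
    {s : Set Ω} (hs : MeasurableSet s) (hμs : μ s ≠ 0) :
    relEnt μ[|s] μ < ⊤ := by
  have : IsProbabilityMeasure μ[|s] := cond_isProbabilityMeasure hμs
  rw [relEnt, if_pos ⟨cond_absolutelyContinuous,
    (integrable_const _).congr (llr_cond_ae_eq hs hμs).symm⟩]
  exact ENNReal.ofReal_lt_top

lemma measure_ball_pos_of_isCompact {X : Type*} [PseudoMetricSpace X] [MeasurableSpace X]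
    {μ : Measure X} {K : Set X} (hK : IsCompact K) (hμK : μ K ≠ 0) {r : ℝ} (hr : 0 < r)
    (hball : ∀ x ∈ K, ∀ y ∈ K, μ (ball x r) = μ (ball y r)) {x : X} (hx : x ∈ K) :
    0 < μ (ball x r) := by
  obtain ⟨t, htK, ht, hKt⟩ := finite_cover_balls_of_compact hK hr
  refine pos_iff_ne_zero.2 fun hx0 => hμK (measure_mono_null hKt ?_)
  exact (measure_biUnion_null_iff ht.countable).2 fun y hy => (hball y (htK hy) x hx).trans hx0

section InnerProductSpace

variable {E : Type*} [NormedAddCommGroup E] [InnerProductSpace ℝ E]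

lemma measure_ball_eq_of_norm_eq [MeasurableSpace E] [BorelSpace E] {μ : Measure E}
    (hμ : ∀ T : E ≃ₗᵢ[ℝ] E, μ.map T = μ) {x y : E} (hxy : ‖x‖ = ‖y‖) (r : ℝ) :
    μ (ball x r) = μ (ball y r) := by
  set T : E ≃ₗᵢ[ℝ] E := (ℝ ∙ (y - x))ᗮ.reflection
  have hTy : T.symm x = y := T.symm_apply_eq.2 (Submodule.reflection_sub hxy.symm).symm
  calc μ (ball x r) = μ.map T (ball x r) := by rw [hμ]
    _ = μ (ball y r) := by
      rw [Measure.map_apply T.continuous.measurable measurableSet_ball, ← hTy]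
      exact congrArg μ (T.toIsometryEquiv.preimage_ball x r)

lemma measure_ball_pos_of_mem_sphere [MeasurableSpace E] [BorelSpace E] [ProperSpace E]
    {μ : Measure E} (hμ : ∀ T : E ≃ₗᵢ[ℝ] E, μ.map T = μ) {R : ℝ} (hμR : μ (sphere 0 R) ≠ 0)
    {x : E} (hx : x ∈ sphere 0 R) {r : ℝ} (hr : 0 < r) :
    0 < μ (ball x r) := by
  refine measure_ball_pos_of_isCompact (isCompact_sphere 0 R) hμR hr (fun y hy z hz => ?_) hx
  exact measure_ball_eq_of_norm_eq hμ
    ((mem_sphere_zero_iff_norm.1 hy).trans (mem_sphere_zero_iff_norm.1 hz).symm) r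

lemma inner_neg_of_mem_ball {u v e : E} (hu : ‖u‖ = 1) (hv : ‖v‖ = 1) (he : ‖e‖ = 1)
    (hue : u ∈ ball e (1 / 4)) (hve : v ∈ ball (-e) (1 / 4)) :
    ⟪u, v⟫ < 0 := by
  rw [mem_ball, dist_eq_norm] at hue hve
  have h2 : ‖e - -e‖ = 2 := by rw [sub_neg_eq_add, ← two_smul ℝ, norm_smul, he]; norm_num
  have htri : ‖e - -e‖ ≤ ‖u - v‖ + ‖u - e‖ + ‖v - -e‖ :=
    calc ‖e - -e‖ = ‖(u - v) - (u - e) + (v - -e)‖ := by congr 1; abel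
      _ ≤ ‖(u - v) - (u - e)‖ + ‖v - -e‖ := norm_add_le _ _
      _ ≤ _ := by gcongr; exact norm_sub_le _ _
  have huv : 3 / 2 < ‖u - v‖ := by linarith
  nlinarith [norm_sub_sq_real u v]

end InnerProductSpace

lemma sphereCost_eq_top_of_inner_nonpos {n : ℕ} {u v : EuclideanSpace ℝ (Fin (n + 1))}
    (h : ⟪u, v⟫ ≤ 0) : sphereCost u v = ⊤ := by
  rw [sphereCost, if_neg h.not_gt]

/-- There exists a probability measure `ν` on the unit sphere `Sⁿ ⊂ ℝ^{n+1}` (encoded as a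
measure on `ℝ^{n+1}` concentrated on the unit sphere) with `T_α(ν,σ) = +∞` and
`H(ν|σ) < +∞`, where `σ` is the uniform (rotation-invariant) probability measure on `Sⁿ`. -/
theorem exists_infinite_transport_finite_entropy (n : ℕ)
    (σ : Measure (EuclideanSpace ℝ (Fin (n + 1)))) [IsProbabilityMeasure σ]
    (hσsphere : σ (Metric.sphere (0 : EuclideanSpace ℝ (Fin (n + 1))) 1)ᶜ = 0)
    (hσinv : ∀ T : EuclideanSpace ℝ (Fin (n + 1)) ≃ₗᵢ[ℝ] EuclideanSpace ℝ (Fin (n + 1)),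
      σ.map T = σ) :
    ∃ ν : Measure (EuclideanSpace ℝ (Fin (n + 1))),
      IsProbabilityMeasure ν ∧
      ν (Metric.sphere (0 : EuclideanSpace ℝ (Fin (n + 1))) 1)ᶜ = 0 ∧
      transportCost sphereCost ν σ = ⊤ ∧
      relEnt ν σ < ⊤ := by
  set S := sphere (0 : EuclideanSpace ℝ (Fin (n + 1))) 1
  have hS : MeasurableSet S := isClosed_sphere.measurableSet
  have hσS : σ S ≠ 0 := ((prob_compl_eq_zero_iff hS).1 hσsphere).trans_ne one_ne_zero
  have hcap : ∀ x ∈ S, σ (S ∩ ball x (1 / 4)) ≠ 0 := fun x hx => by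
    rw [inter_comm, measure_inter_conull hσsphere]
    exact (measure_ball_pos_of_mem_sphere hσinv hσS hx (by norm_num)).ne'
  set e := EuclideanSpace.single (0 : Fin (n + 1)) (1 : ℝ)
  have he : ‖e‖ = 1 := by simp [e]
  have heS : e ∈ S := mem_sphere_zero_iff_norm.2 he
  have hneS : -e ∈ S := mem_sphere_zero_iff_norm.2 (by rw [norm_neg, he])
  set C := S ∩ ball e (1 / 4)
  have hC : MeasurableSet C := hS.inter measurableSet_ball
  have hνC : σ[|C] Cᶜ = 0 := by simp [cond_apply hC]
  refine ⟨σ[|C], cond_isProbabilityMeasure (hcap e heS),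
    measure_mono_null (compl_subset_compl.2 inter_subset_left) hνC, ?_,
    relEnt_cond_lt_top hC (hcap e heS)⟩
  refine transportCost_eq_top_of_eq_top_on_prod hC (hS.inter measurableSet_ball) hνC
    (hcap (-e) hneS) fun u ⟨hu, hue⟩ v ⟨hv, hve⟩ => ?_
  exact sphereCost_eq_top_of_inner_nonpos (inner_neg_of_mem_ball
    (mem_sphere_zero_iff_norm.1 hu) (mem_sphere_zero_iff_norm.1 hv) he hue hve).le
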